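/- Let E > 0 and m ∈ ℝ. Regard b₁ = P₃/√(2E), b₂ = L₁² + L₂², b₃ = (L₁P₂ - L₂P₁)/√(2E) as smooth functions on ℝ⁶ with coordinates (P,L), and let {f,g} = (∇f)ᵀ B (∇g) be the bracket given by the matrix B(P,L) = -[[0,P̂],[P̂,L̂]]. Then at every point (P,L) ∈ ℝ⁶ satisfying |P|² = 2E, P·L = 0 and L₃ = m, the brackets of the invariants are: {b₁,b₂} = 2b₃, {b₁,b₃} = 1 - b₁², and {b₂,b₃} = 2b₁m² + 2b₁b₂. Hence the reduced Poisson structure on ℝ³ with coordinates (b₁,b₂,b₃) is given by the tensor ∇C₃^ (the hat matrix of the gradient of C₃(b) = (1-b₁²)b₂ - b₁²m² - b₃²), and C₃ is its Casimir. -/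

import Mathlib

open Matrix

noncomputable section

/-- The cross product in `ℝ³`. -/
def cross3 (v w : Fin 3 → ℝ) : Fin 3 → ℝ :=
  ![v 1 * w 2 - v 2 * w 1, v 2 * w 0 - v 0 * w 2, v 0 * w 1 - v 1 * w 0]

/-- The dot product in `ℝ³`. -/
def dot3 (v w : Fin 3 → ℝ) : ℝ := v 0 * w 0 + v 1 * w 1 + v 2 * w 2

/-- For `v ∈ ℝ³`, the antisymmetric hat matrix with `v̂ u = v × u`. -/
def hat (v : Fin 3 → ℝ) : Matrix (Fin 3) (Fin 3) ℝ :=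
  !![0, -v 2, v 1; v 2, 0, -v 0; -v 1, v 0, 0]

/-- The Lie–Poisson structure matrix of `e*(3)`:  `B = -[[0, P̂],[P̂, L̂]]`. -/
def Bmat (P L : Fin 3 → ℝ) : Matrix (Fin 3 ⊕ Fin 3) (Fin 3 ⊕ Fin 3) ℝ :=
  - Matrix.fromBlocks 0 (hat P) (hat P) (hat L)

/-- `ℝ⁶` as a Euclidean space, first three coordinates `P`, last three `L`. -/
abbrev R6 := EuclideanSpace ℝ (Fin 3 ⊕ Fin 3)

def Pof (w : R6) : Fin 3 → ℝ := fun i => w (Sum.inl i)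

def Lof (w : R6) : Fin 3 → ℝ := fun i => w (Sum.inr i)

/-- The Lie–Poisson bracket `{f,g} = (∇f)ᵀ B (∇g)` of `e*(3)`. -/
def pbrack (f g : R6 → ℝ) (w : R6) : ℝ :=
  dotProduct (fun i => gradient f w i)
    ((Bmat (Pof w) (Lof w)).mulVec (fun i => gradient g w i))

/-- The invariant `b₁ = P₃/√(2E)`. -/
def b1fun (E : ℝ) : R6 → ℝ := fun w => Pof w 2 / Real.sqrt (2 * E)

/-- The invariant `b₂ = L₁² + L₂²`. -/
def b2fun : R6 → ℝ := fun w => (Lof w 0) ^ 2 + (Lof w 1) ^ 2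

/-- The invariant `b₃ = (L₁P₂ - L₂P₁)/√(2E)`. -/
def b3fun (E : ℝ) : R6 → ℝ := fun w =>
  (Lof w 0 * Pof w 1 - Lof w 1 * Pof w 0) / Real.sqrt (2 * E)

/-- `ℝ³` (`b`-space) as a Euclidean space. -/
abbrev E3 := EuclideanSpace ℝ (Fin 3)

/-- `C₃(b) = (1-b₁²)b₂ - b₁²m² - b₃²`. -/
def C3fun (m : ℝ) : E3 → ℝ := fun b =>
  (1 - (b 0) ^ 2) * b 1 - (b 0) ^ 2 * m ^ 2 - (b 2) ^ 2

/-!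
Writing `∇f = (a, α)` and `∇g = (b, β)` in `P`- and `L`-components, the bracket is
`{f, g} = -(a · (P × β) + α · (P × b + L × β))`. The gradients of `b₁, b₂, b₃` are linear in
`(P, L)`, so each bracket is a polynomial in `P, L`, which reduces to the claimed value on the
level set using `|P|² = 2E` and `P · L = 0`. `C₃` is a Casimir of `∇C₃^` because
`∇C₃ · (∇C₃ × u) = 0`.
-/

lemma dot3_eq_dotProduct (v w : Fin 3 → ℝ) : dot3 v w = v ⬝ᵥ w :=
  (vec3_dotProduct v w).symm

lemma cross3_eq_crossProduct (v w : Fin 3 → ℝ) : cross3 v w = v ⨯₃ w := rfl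

lemma cross_vec3 {R : Type*} [CommRing R] (a : Fin 3 → R) (b₀ b₁ b₂ : R) :
    a ⨯₃ ![b₀, b₁, b₂] = ![a 1 * b₂ - a 2 * b₁, a 2 * b₀ - a 0 * b₂, a 0 * b₁ - a 1 * b₀] :=
  rfl

lemma hat_mulVec (v u : Fin 3 → ℝ) : hat v *ᵥ u = v ⨯₃ u := by
  ext i
  fin_cases i <;>
    simp [hat, cross_apply, mulVec, dotProduct, Fin.sum_univ_three, sub_eq_add_neg, add_comm]

lemma HasFDerivAt.gradient_apply {ι : Type*} [Fintype ι] [DecidableEq ι]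
    {f : EuclideanSpace ℝ ι → ℝ} {f' : EuclideanSpace ℝ ι →L[ℝ] ℝ} {x : EuclideanSpace ℝ ι}
    (h : HasFDerivAt f f' x) (i : ι) :
    gradient f x i = f' (EuclideanSpace.single i 1) := by
  rw [← h.fderiv, ← inner_gradient_left, EuclideanSpace.inner_single_right]
  simp

lemma hasFDerivAt_coord {ι : Type*} [Fintype ι] (x : EuclideanSpace ℝ ι) (j : ι) :
    HasFDerivAt (fun v : EuclideanSpace ℝ ι => v j) (EuclideanSpace.proj (𝕜 := ℝ) j) x :=
  (EuclideanSpace.proj (𝕜 := ℝ) j).hasFDerivAt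

lemma pbrack_eq_of_gradient_eq {f g : R6 → ℝ} {w : R6} {a α b β : Fin 3 → ℝ}
    (hf : gradient f w = WithLp.toLp 2 (Sum.elim a α))
    (hg : gradient g w = WithLp.toLp 2 (Sum.elim b β)) :
    pbrack f g w = -(a ⬝ᵥ Pof w ⨯₃ β + α ⬝ᵥ (Pof w ⨯₃ b + Lof w ⨯₃ β)) := by
  simp only [pbrack, hf, hg, PiLp.toLp_apply, Bmat, neg_mulVec, dotProduct_neg, fromBlocks_mulVec,
    sumElim_dotProduct_sumElim, Sum.elim_comp_inl, Sum.elim_comp_inr, zero_mulVec, zero_add,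
    hat_mulVec]

lemma gradient_b1fun (E : ℝ) (w : R6) :
    gradient (b1fun E) w = WithLp.toLp 2 (Sum.elim ![0, 0, 1 / √(2 * E)] ![0, 0, 0]) := by
  have h : HasFDerivAt (b1fun E) _ w := (hasFDerivAt_coord w (Sum.inl 2)).mul_const (√(2 * E))⁻¹
  ext (k | k) <;> fin_cases k <;> simp [h.gradient_apply]

lemma gradient_b2fun (w : R6) :
    gradient b2fun w = WithLp.toLp 2 (Sum.elim ![0, 0, 0] ![2 * Lof w 0, 2 * Lof w 1, 0]) := by
  have h : HasFDerivAt b2fun _ w :=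
    ((hasFDerivAt_coord w (Sum.inr 0)).pow 2).add ((hasFDerivAt_coord w (Sum.inr 1)).pow 2)
  ext (k | k) <;> fin_cases k <;> simp [h.gradient_apply, Lof]

lemma gradient_b3fun (E : ℝ) (w : R6) :
    gradient (b3fun E) w = WithLp.toLp 2 (Sum.elim
      ![-Lof w 1 / √(2 * E), Lof w 0 / √(2 * E), 0] ![Pof w 1 / √(2 * E), -Pof w 0 / √(2 * E), 0]) := by
  have h : HasFDerivAt (b3fun E) _ w :=
    (((hasFDerivAt_coord w (Sum.inr 0)).mul (hasFDerivAt_coord w (Sum.inl 1))).sub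
      ((hasFDerivAt_coord w (Sum.inr 1)).mul (hasFDerivAt_coord w (Sum.inl 0)))).mul_const
      (√(2 * E))⁻¹
  ext (k | k) <;> fin_cases k <;> simp [h.gradient_apply, Pof, Lof, div_eq_inv_mul]

lemma pbrack_b1fun_b2fun (E : ℝ) (w : R6) : pbrack (b1fun E) b2fun w = 2 * b3fun E w := by
  rw [pbrack_eq_of_gradient_eq (gradient_b1fun E w) (gradient_b2fun w), b3fun]
  simp only [cross_vec3, vec3_add, vec3_dotProduct']
  ring

lemma pbrack_b1fun_b3fun {E : ℝ} (hE : 0 < E) {w : R6} (hP : dot3 (Pof w) (Pof w) = 2 * E) :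
    pbrack (b1fun E) (b3fun E) w = 1 - b1fun E w ^ 2 := by
  rw [pbrack_eq_of_gradient_eq (gradient_b1fun E w) (gradient_b3fun E w), b1fun]
  rw [dot3] at hP
  have hc : √(2 * E) ^ 2 = 2 * E := Real.sq_sqrt (by positivity)
  have hc0 : √(2 * E) ≠ 0 := by positivity
  simp only [cross_vec3, vec3_add, vec3_dotProduct']
  field_simp
  linear_combination hP - hc

lemma pbrack_b2fun_b3fun (E : ℝ) {w : R6} (hPL : dot3 (Pof w) (Lof w) = 0) :
    pbrack b2fun (b3fun E) w = 2 * b1fun E w * Lof w 2 ^ 2 + 2 * b1fun E w * b2fun w := by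
  rw [pbrack_eq_of_gradient_eq (gradient_b2fun w) (gradient_b3fun E w), b1fun, b2fun]
  rw [dot3] at hPL
  simp only [cross_vec3, vec3_add, vec3_dotProduct']
  linear_combination (-2 * (√(2 * E))⁻¹ * Lof w 2) * hPL

/-- On `|P|² = 2E`, `P·L = 0`, `L₃ = m`, the invariants of the `S¹` action satisfy
`{b₁,b₂} = 2b₃`, `{b₁,b₃} = 1 - b₁²`, `{b₂,b₃} = 2b₁m² + 2b₁b₂`; these are the
entries of the reduced Poisson tensor `∇C₃^`, and `C₃` is a Casimir of the reduced
bracket `{f,g}(b) = ∇f·(∇C₃ × ∇g)` (the scalar triple product with `∇C₃` repeated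
vanishes). -/
theorem invariant_brackets (E m : ℝ) (hE : 0 < E) (w : R6)
    (hP : dot3 (Pof w) (Pof w) = 2 * E) (hPL : dot3 (Pof w) (Lof w) = 0)
    (hm : Lof w 2 = m) :
    pbrack (b1fun E) b2fun w = 2 * b3fun E w ∧
    pbrack (b1fun E) (b3fun E) w = 1 - (b1fun E w) ^ 2 ∧
    pbrack b2fun (b3fun E) w = 2 * b1fun E w * m ^ 2 + 2 * b1fun E w * b2fun w ∧
    (∀ (b : E3) (u : Fin 3 → ℝ),
      dot3 (fun i => gradient (C3fun m) b i)
        (cross3 (fun i => gradient (C3fun m) b i) u) = 0) :=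
  ⟨pbrack_b1fun_b2fun E w, pbrack_b1fun_b3fun hE hP, hm ▸ pbrack_b2fun_b3fun E hPL,
    fun b u => by rw [dot3_eq_dotProduct, cross3_eq_crossProduct, dot_self_cross]⟩
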